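/- arXiv:1106.4368 — 2 statements merged into one kernel-verified Lean document; each statement's English description precedes it below -/
import Mathlib

section
/- Let T₁, T₂ > 0 and let μ : ℝ → ℝ be C¹ and nonnegative with μ integrable on (0,∞). Suppose β : ℝ² → ℝ is C³ and periodic with periods T₁, T₂ (β(x + Tᵢeᵢ) = β(x) for all x and i = 1,2), and suppose that for every x ∈ ℝ², −Δβ(x) = 1 − ∫_{ℝ²} μ(|v|²/2 − β(x)) dv. Then ∇β ≡ 0; i.e. β is constant, so the electric field E₀ = −∇β vanishes identically. -/
/-!
Integrating out the velocity turns the Poisson equation into `Δβ = G(β)` with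
`G(c) = 2π ∫_{-c}^∞ μ - 1`, and `G` is nondecreasing because `μ ≥ 0`. By periodicity `β` attains
its maximum and its minimum; there `Δβ ≤ 0`, resp. `Δβ ≥ 0`, so monotonicity of `G` squeezes
`G(β) ≡ 0`. Hence `β` is harmonic, and being periodic it is bounded, so it is constant by
Liouville's theorem for harmonic functions on the plane.
-/

open MeasureTheory Real

/-- The Laplacian of `β : ℝ² → ℝ`, as the sum of second partial derivatives. -/
noncomputable def lap2 (β : EuclideanSpace ℝ (Fin 2) → ℝ) (x : EuclideanSpace ℝ (Fin 2)) : ℝ :=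
  ∑ i : Fin 2, iteratedFDeriv ℝ 2 β x ![EuclideanSpace.single i 1, EuclideanSpace.single i 1]

open Set Filter Topology InnerProductSpace Laplacian

local notation "ℝ²" => EuclideanSpace ℝ (Fin 2)

theorem IsLocalMax.deriv_deriv_nonpos {f : ℝ → ℝ} {a : ℝ} (h : IsLocalMax f a)
    (hc : ContinuousAt f a) : deriv (deriv f) a ≤ 0 := by
  by_contra! hpos
  -- `f'' a > 0` would make `a` a local minimum as well, so `f` would be locally constant
  have hmin : IsLocalMin f a := isLocalMin_of_deriv_deriv_pos hpos h.deriv_eq_zero hc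
  have hconst : f =ᶠ[𝓝 a] fun _ => f a := (h.and hmin).mono fun y hy => le_antisymm hy.1 hy.2
  have := hconst.deriv.deriv_eq
  simp only [deriv_const', deriv_const] at this
  linarith

theorem iteratedDeriv_comp_add_smul {E F : Type*} [NormedAddCommGroup E] [NormedSpace ℝ E]
    [NormedAddCommGroup F] [NormedSpace ℝ F] {f : E → F} {n : ℕ} (hf : ContDiff ℝ n f)
    (x v : E) (t : ℝ) :
    iteratedDeriv n (fun s : ℝ => f (x + s • v)) t =
      iteratedFDeriv ℝ n f (x + t • v) (fun _ => v) := by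
  have : (fun s : ℝ => f (x + s • v)) =
      (fun y => f (x + y)) ∘ ContinuousLinearMap.toSpanSingleton ℝ v := rfl
  rw [iteratedDeriv_eq_iteratedFDeriv, this,
    ContinuousLinearMap.iteratedFDeriv_comp_right _
      (f := fun y => f (x + y)) (hf.comp (contDiff_const.add contDiff_id)) _ le_rfl,
    iteratedFDeriv_comp_add_left]
  simp

theorem IsLocalMax.iteratedFDeriv_two_nonpos {E : Type*} [NormedAddCommGroup E]
    [NormedSpace ℝ E] {f : E → ℝ} {x : E} (h : IsLocalMax f x) (hf : ContDiff ℝ 2 f) (v : E) :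
    iteratedFDeriv ℝ 2 f x ![v, v] ≤ 0 := by
  have hline : Continuous fun t : ℝ => x + t • v := by fun_prop
  have hmax : IsLocalMax (fun t : ℝ => f (x + t • v)) 0 :=
    IsLocalMax.comp_continuous (by simpa using h) hline.continuousAt
  have h2 := hmax.deriv_deriv_nonpos (hf.continuous.comp hline).continuousAt
  rw [← iteratedDeriv_one, ← iteratedDeriv_succ', iteratedDeriv_comp_add_smul hf] at h2
  convert h2 using 2
  · simp
  · ext i; fin_cases i <;> rfl

section Laplacian

variable {E : Type*} [NormedAddCommGroup E] [InnerProductSpace ℝ E] [FiniteDimensional ℝ E]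

theorem IsLocalMax.laplacian_nonpos {f : E → ℝ} {x : E} (h : IsLocalMax f x)
    (hf : ContDiff ℝ 2 f) : Δ f x ≤ 0 := by
  rw [laplacian_eq_iteratedFDeriv_stdOrthonormalBasis]
  exact Finset.sum_nonpos fun i _ => h.iteratedFDeriv_two_nonpos hf _

theorem IsLocalMin.laplacian_nonneg {f : E → ℝ} {x : E} (h : IsLocalMin f x)
    (hf : ContDiff ℝ 2 f) : 0 ≤ Δ f x := by
  have := IsLocalMax.laplacian_nonpos (f := -f) h.neg hf.neg
  rw [laplacian_neg] at this
  simpa using this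

theorem laplacian_comp_linearIsometryEquiv {F G : Type*} [NormedAddCommGroup F]
    [InnerProductSpace ℝ F] [FiniteDimensional ℝ F] [NormedAddCommGroup G] [NormedSpace ℝ G]
    {g : E → G} (hg : ContDiff ℝ 2 g) (L : F ≃ₗᵢ[ℝ] E) : Δ (g ∘ L) = Δ g ∘ L := by
  let b := stdOrthonormalBasis ℝ F
  ext y
  rw [laplacian_eq_iteratedFDeriv_orthonormalBasis _ b,
    laplacian_eq_iteratedFDeriv_orthonormalBasis _ (b.map L)]
  simp only [Function.comp_apply]
  congr 1; ext i
  rw [show (g ∘ L) = g ∘ (L.toContinuousLinearEquiv : F →L[ℝ] E) from rfl,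
    ContinuousLinearMap.iteratedFDeriv_comp_right _ hg _ le_rfl]
  simp only [ContinuousMultilinearMap.compContinuousLinearMap_apply]
  congr 1
  ext j; fin_cases j <;> simp

theorem Monotone.laplacian_eq_zero_of_laplacian_eq_comp {β : E → ℝ} (hβ : ContDiff ℝ 2 β)
    {G : ℝ → ℝ} (hG : Monotone G) (hΔ : ∀ x, Δ β x = G (β x)) {x₀ x₁ : E}
    (hx₀ : ∀ x, β x ≤ β x₀) (hx₁ : ∀ x, β x₁ ≤ β x) : Δ β = 0 := by
  have hmax : G (β x₀) ≤ 0 := hΔ x₀ ▸ IsLocalMax.laplacian_nonpos (Eventually.of_forall hx₀) hβ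
  have hmin : 0 ≤ G (β x₁) := hΔ x₁ ▸ IsLocalMin.laplacian_nonneg (Eventually.of_forall hx₁) hβ
  ext x
  rw [hΔ]
  exact le_antisymm ((hG (hx₀ x)).trans hmax) (hmin.trans (hG (hx₁ x)))

end Laplacian

theorem lap2_eq_laplacian (β : ℝ² → ℝ) : lap2 β = Δ β := by
  rw [laplacian_eq_iteratedFDeriv_orthonormalBasis β (EuclideanSpace.basisFun (Fin 2) ℝ)]
  ext x
  simp [lap2]

theorem eq_of_laplacian_eq_zero_of_isBounded {β : ℝ² → ℝ} (hβ : ContDiff ℝ 2 β)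
    (hharm : Δ β = 0) (hbdd : Bornology.IsBounded (range β)) (x y : ℝ²) : β x = β y := by
  let L : ℂ ≃ₗᵢ[ℝ] ℝ² := Complex.orthonormalBasisOneI.repr
  have hharmL : HarmonicOnNhd (β ∘ L) univ := fun z _ =>
    ⟨(hβ.comp L.contDiff).contDiffAt, by
      rw [laplacian_comp_linearIsometryEquiv hβ, hharm]; rfl⟩
  have := bounded_harmonic_on_complex_plane_is_constant _ hharmL
    (by rwa [range_comp, L.surjective.range_eq, image_univ])
  simpa using this (L.symm x) (L.symm y)

theorem isCompact_range_of_periodic {X : Type*} [TopologicalSpace X] {f : ℝ² → X}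
    (hf : Continuous f) {T₁ T₂ : ℝ} (hT₁ : 0 < T₁) (hT₂ : 0 < T₂)
    (hper1 : ∀ x, f (x + T₁ • EuclideanSpace.single 0 1) = f x)
    (hper2 : ∀ x, f (x + T₂ • EuclideanSpace.single 1 1) = f x) :
    IsCompact (range f) := by
  let g : ℝ × ℝ → X := fun p =>
    f (p.1 • EuclideanSpace.single 0 1 + p.2 • EuclideanSpace.single 1 1)
  have hg : Continuous g := by fun_prop
  suffices range f = g '' (Icc 0 T₁ ×ˢ Icc 0 T₂) from
    this ▸ (isCompact_Icc.prod isCompact_Icc).image hg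
  refine Subset.antisymm ?_ ((image_subset_range _ _).trans (range_comp_subset_range _ f))
  rintro _ ⟨x, rfl⟩
  have hx : x = x 0 • EuclideanSpace.single 0 1 + x 1 • EuclideanSpace.single 1 1 := by
    ext i; fin_cases i <;> simp
  have hper₁ (t : ℝ) : Function.Periodic (fun s => g (s, t)) T₁ := fun s => by
    simp only [g, add_smul]
    rw [add_right_comm]
    exact hper1 _
  have hper₂ (s : ℝ) : Function.Periodic (fun t => g (s, t)) T₂ := fun t => by
    simp only [g, add_smul, ← add_assoc]
    exact hper2 _
  obtain ⟨s, hs, hs'⟩ := (hper₁ (x 1)).exists_mem_Ico₀ hT₁ (x 0)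
  obtain ⟨t, ht, ht'⟩ := (hper₂ s).exists_mem_Ico₀ hT₂ (x 1)
  exact ⟨(s, t), ⟨Ico_subset_Icc_self hs, Ico_subset_Icc_self ht⟩, by
    rw [hx]; exact (hs'.trans ht').symm⟩

theorem integral_Ioi_comp_sub_right {E : Type*} [NormedAddCommGroup E] [NormedSpace ℝ E]
    (g : ℝ → E) (a c : ℝ) : ∫ x in Ioi a, g (x - c) = ∫ x in Ioi (a - c), g x := by
  rw [← integral_indicator measurableSet_Ioi, ← integral_indicator measurableSet_Ioi,
    ← integral_sub_right_eq_self (indicator (Ioi (a - c)) g) c]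
  congr 1; ext x
  simp only [indicator, mem_Ioi, sub_lt_sub_iff_right]

theorem integral_comp_half_norm_sq_sub {F : Type*} [NormedAddCommGroup F] [NormedSpace ℝ F]
    (g : ℝ → F) (c : ℝ) :
    ∫ v : ℝ², g (‖v‖ ^ 2 / 2 - c) = (2 * π) • ∫ s in Ioi (-c), g s := by
  -- polar coordinates, then the substitutions `t = r ^ 2` and `s = t / 2 - c`
  have hpolar := integral_fun_norm_addHaar (volume : Measure ℝ²) (fun r => g (r ^ 2 / 2 - c))
  have hsq := integral_comp_rpow_Ioi_of_pos (g := fun t => g (t / 2 - c)) (p := 2) two_pos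
  have hhalf := integral_comp_mul_right_Ioi (fun t => g (t - c)) 0 (b := 1 / 2) (by norm_num)
  rw [integral_Ioi_comp_sub_right] at hhalf
  have hradial : ∫ r in Ioi 0, r ^ (2 - 1) • g (r ^ 2 / 2 - c) =
      (1 / 2 : ℝ) • ∫ t in Ioi 0, g (t / 2 - c) := by
    rw [← hsq, ← integral_smul]
    refine setIntegral_congr_fun measurableSet_Ioi fun r _ => ?_
    norm_num [smul_smul, ← mul_assoc]
  have hlin : ∫ t in Ioi 0, g (t / 2 - c) = (2 : ℝ) • ∫ s in Ioi (-c), g s := by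
    simpa [div_eq_mul_inv] using hhalf
  rw [hpolar, finrank_euclideanSpace_fin, measureReal_def,
    EuclideanSpace.volume_ball_fin_two, hradial, hlin, ← Nat.cast_smul_eq_nsmul ℝ]
  simp [smul_smul, ENNReal.toReal_ofReal pi_nonneg, mul_comm]

theorem MeasureTheory.IntegrableOn.integrableOn_Ioi_of_continuous {f : ℝ → ℝ}
    (hf : Continuous f) {a : ℝ} (h : IntegrableOn f (Ioi a)) (b : ℝ) :
    IntegrableOn f (Ioi b) := by
  rcases le_or_gt a b with hab | hba
  · exact h.mono_set (Ioi_subset_Ioi hab)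
  · rw [← Ioc_union_Ioi_eq_Ioi hba.le]
    exact hf.integrableOn_Ioc.union h

theorem antitone_integral_Ioi {f : ℝ → ℝ} (hpos : ∀ s, 0 ≤ f s)
    (hint : ∀ c, IntegrableOn f (Ioi c)) : Antitone fun c => ∫ s in Ioi c, f s :=
  fun c _ hcd => setIntegral_mono_set (hint c) (ae_of_all _ hpos)
    (Ioi_subset_Ioi hcd).eventuallyLE

/-- Non-existence of genuinely 2D BGK waves: if `μ : ℝ → ℝ` is `C¹`, nonnegative and
integrable on `(0,∞)`, `β : ℝ² → ℝ` is `C³`, periodic with periods `T₁, T₂`, and satisfies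
`−Δβ(x) = 1 − ∫_{ℝ²} μ(|v|²/2 − β(x)) dv` for all `x`, then `∇β ≡ 0`. -/
theorem stmt_0 (T₁ T₂ : ℝ) (hT₁ : 0 < T₁) (hT₂ : 0 < T₂)
    (μ : ℝ → ℝ) (hμreg : ContDiff ℝ 1 μ) (hμpos : ∀ s, 0 ≤ μ s)
    (hμint : IntegrableOn μ (Set.Ioi (0 : ℝ)))
    (β : EuclideanSpace ℝ (Fin 2) → ℝ) (hβ : ContDiff ℝ 3 β)
    (hper1 : ∀ x, β (x + T₁ • EuclideanSpace.single (0 : Fin 2) (1 : ℝ)) = β x)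
    (hper2 : ∀ x, β (x + T₂ • EuclideanSpace.single (1 : Fin 2) (1 : ℝ)) = β x)
    (hPoisson : ∀ x, -lap2 β x = 1 - ∫ v : EuclideanSpace ℝ (Fin 2), μ (‖v‖ ^ 2 / 2 - β x)) :
    ∀ x, gradient β x = 0 := by
  intro x
  have hβ₂ : ContDiff ℝ 2 β := hβ.of_le (by norm_num)
  let G : ℝ → ℝ := fun c => 2 * π * (∫ s in Ioi (-c), μ s) - 1
  have hΔ (y : ℝ²) : Δ β y = G (β y) := by
    have := hPoisson y
    rw [lap2_eq_laplacian, integral_comp_half_norm_sq_sub, smul_eq_mul] at this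
    linarith
  have hG : Monotone G := fun c d hcd => by
    have := antitone_integral_Ioi hμpos (hμint.integrableOn_Ioi_of_continuous hμreg.continuous)
      (neg_le_neg hcd)
    exact sub_le_sub_right (mul_le_mul_of_nonneg_left this (by positivity)) 1
  have hK := isCompact_range_of_periodic hβ.continuous hT₁ hT₂ hper1 hper2
  obtain ⟨_, ⟨x₀, rfl⟩, hx₀⟩ := hK.exists_isGreatest (range_nonempty β)
  obtain ⟨_, ⟨x₁, rfl⟩, hx₁⟩ := hK.exists_isLeast (range_nonempty β)
  have hharm := hG.laplacian_eq_zero_of_laplacian_eq_comp hβ₂ hΔ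
    (fun y => hx₀ ⟨y, rfl⟩) (fun y => hx₁ ⟨y, rfl⟩)
  have hconst : β = fun _ => β x :=
    funext fun y => eq_of_laplacian_eq_zero_of_isBounded hβ₂ hharm hK.isBounded y x
  rw [hconst]
  exact gradient_fun_const x _
end

section
/- Let μ : ℝ → ℝ be continuous and nonnegative with ∫₀^∞ μ(r)(1 + √r) dr < ∞. Then the function G : ℝ → ℝ defined by G(β) = ∫_{ℝ³} μ(|v|²/2 − β) dv is differentiable with G′(β) = 2√2 π ∫_{−β}^{∞} μ(u) (u + β)^{−1/2} du ≥ 0 for every β ∈ ℝ. In particular, g(β) = 1 − ∫_{ℝ³} μ(|v|²/2 − β) dv satisfies g′(β) ≤ 0 for all β. -/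
/-!
In polar coordinates, and with `u = |v|²/2 - β`, `G(β) = 4√2π ∫ μ(u) √(u + β) du`. As
`√(u + b) - √(u + a) = ½ ∫_a^b (u + t)^{-1/2} dt`, Fubini gives `G(b) - G(a) = 2√2π ∫_a^b φ` with
`φ(t) = ∫ μ(u) (u + t)^{-1/2} du`, and `G' = 2√2π φ` follows from the fundamental theorem of
calculus once `φ` is continuous. Since `μ` is only continuous, this replaces differentiation
under the integral sign. For the continuity of `φ` the kernel `x₊^{-1/2}` (which is `(√x)⁻¹`,
as `√x = 0` for `x ≤ 0`) is split into a bounded continuous part and an integrable part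
supported in `(0, 1)`; dominated convergence applies to the first in the variable `u` and to
the second in the variable `u + t`.
-/

open MeasureTheory Real Set Filter Topology

lemma rpow_neg_one_half_eq_inv_sqrt (x : ℝ) : x ^ (-(1 : ℝ) / 2) = (√x)⁻¹ := by
  rcases lt_trichotomy x 0 with hx | rfl | hx
  · rw [rpow_def_of_neg hx, sqrt_eq_zero'.mpr hx.le, inv_zero,
      show -(1 : ℝ) / 2 * π = -(π / 2) by ring, cos_neg, cos_pi_div_two, mul_zero]
  · simp
  · rw [sqrt_eq_rpow, ← rpow_neg hx.le]; norm_num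

lemma integral_euclideanSpace_fin_three_fun_norm (f : ℝ → ℝ) :
    ∫ v : EuclideanSpace ℝ (Fin 3), f ‖v‖ = 4 * π * ∫ y in Ioi 0, y ^ 2 * f y := by
  rw [integral_fun_norm_addHaar, finrank_euclideanSpace_fin, measureReal_def,
    EuclideanSpace.volume_ball_fin_three]
  simp only [ENNReal.ofReal_one, one_pow, one_mul, nsmul_eq_mul, smul_eq_mul,
    ENNReal.toReal_ofReal (by positivity : 0 ≤ π * 4 / 3)]
  push_cast; ring

lemma integral_Ioi_mul_comp_sq_div_two_add (g : ℝ → ℝ) (a : ℝ) :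
    ∫ y in Ioi 0, y * g (y ^ 2 / 2 + a) = ∫ u in Ioi a, g u := by
  have hmono : StrictMonoOn (fun y : ℝ => y ^ 2 / 2 + a) (Ici 0) := fun x hx y _ hxy => by
    simp only; gcongr
  have himage : (fun y : ℝ => y ^ 2 / 2 + a) '' Ioi 0 = Ioi a := by
    refine (hmono.image_Ioi_subset.trans (by simp)).antisymm fun u hu => ⟨√(2 * (u - a)), ?_, ?_⟩
    · exact sqrt_pos.mpr (by linarith [mem_Ioi.mp hu])
    · simp only; rw [sq_sqrt (by linarith [mem_Ioi.mp hu])]; ring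
  rw [← himage, integral_image_eq_integral_abs_deriv_smul measurableSet_Ioi
    (fun y _ => ((hasDerivAt_pow 2 y).div_const 2 |>.add_const a).hasDerivWithinAt)
    (hmono.injOn.mono Ioi_subset_Ici_self)]
  refine setIntegral_congr_fun measurableSet_Ioi fun y hy => ?_
  simp [abs_of_pos (mem_Ioi.mp hy)]

lemma sqrt_add_eq_zero_of_notMem_Ioi {u c : ℝ} (hu : u ∉ Ioi (-c)) : √(u + c) = 0 :=
  sqrt_eq_zero'.mpr (by rw [mem_Ioi, not_lt] at hu; linarith)

lemma integral_comp_norm_sq_div_two_sub (μ : ℝ → ℝ) (c : ℝ) :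
    ∫ v : EuclideanSpace ℝ (Fin 3), μ (‖v‖ ^ 2 / 2 - c) = 4 * √2 * π * ∫ u, μ u * √(u + c) := by
  have hradial : ∫ y in Ioi 0, y ^ 2 * μ (y ^ 2 / 2 - c)
      = ∫ y in Ioi 0, y * (√2 * (μ (y ^ 2 / 2 + -c) * √(y ^ 2 / 2 + -c + c))) := by
    refine setIntegral_congr_fun measurableSet_Ioi fun y hy => ?_
    have : √2 * √(y ^ 2 / 2) = y := by
      rw [← sqrt_mul zero_le_two, mul_div_cancel₀ _ two_ne_zero, sqrt_sq (le_of_lt hy)]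
    rw [← sub_eq_add_neg, sub_add_cancel]
    linear_combination (y * μ (y ^ 2 / 2 - c)) * this.symm
  have hsupport : ∀ u ∉ Ioi (-c), μ u * √(u + c) = 0 := fun u hu => by
    rw [sqrt_add_eq_zero_of_notMem_Ioi hu, mul_zero]
  rw [integral_euclideanSpace_fin_three_fun_norm (fun y => μ (y ^ 2 / 2 - c)), hradial,
    integral_Ioi_mul_comp_sq_div_two_add (fun u => √2 * (μ u * √(u + c))), integral_const_mul,
    setIntegral_eq_integral_of_forall_compl_eq_zero hsupport]
  ring

lemma Continuous.integrableOn_Ioi_of_integrableOn_Ioi {E : Type*} [NormedAddCommGroup E]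
    {f : ℝ → E} (hf : Continuous f) {a : ℝ} (h : IntegrableOn f (Ioi a)) (b : ℝ) :
    IntegrableOn f (Ioi b) :=
  (hf.integrableOn_Ioc.union h).mono_set fun x hx => by
    rcases le_or_gt x a with hxa | hxa
    · exact Or.inl ⟨hx, hxa⟩
    · exact Or.inr hxa

lemma sqrt_add_le_one_add_sqrt_abs_mul_one_add_sqrt (u c : ℝ) :
    √(u + c) ≤ (1 + √|c|) * (1 + √u) := by
  have hu : u ≤ √u ^ 2 := by
    rcases le_or_gt u 0 with h | h
    · exact h.trans (sq_nonneg _)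
    · rw [sq_sqrt h.le]
  rw [sqrt_le_left (by positivity)]
  nlinarith [sq_sqrt (abs_nonneg c), le_abs_self c, sqrt_nonneg u, sqrt_nonneg |c|]

noncomputable def invSqrtRegular (x : ℝ) : ℝ := √x / max x 1

noncomputable def invSqrtSingular (x : ℝ) : ℝ := (√x)⁻¹ - invSqrtRegular x

lemma invSqrtRegular_add_invSqrtSingular (x : ℝ) :
    invSqrtRegular x + invSqrtSingular x = (√x)⁻¹ :=
  add_sub_cancel _ _

@[fun_prop]
lemma continuous_invSqrtRegular : Continuous invSqrtRegular :=
  continuous_sqrt.div (continuous_id.max continuous_const) fun x =>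
    (one_pos.trans_le (le_max_right x 1)).ne'

lemma invSqrtRegular_of_nonpos {x : ℝ} (hx : x ≤ 0) : invSqrtRegular x = 0 := by
  rw [invSqrtRegular, sqrt_eq_zero'.mpr hx, zero_div]

lemma norm_invSqrtRegular_le_one (x : ℝ) : ‖invSqrtRegular x‖ ≤ 1 := by
  have hmax : 0 < max x 1 := one_pos.trans_le (le_max_right x 1)
  rw [invSqrtRegular, norm_of_nonneg (by positivity), div_le_one hmax,
    sqrt_le_left hmax.le]
  nlinarith [le_max_left x 1, le_max_right x 1]

lemma invSqrtSingular_eq_zero_of_notMem {x : ℝ} (hx : x ∉ Ioo 0 1) : invSqrtSingular x = 0 := by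
  rcases le_or_gt x 0 with h | h
  · rw [invSqrtSingular, invSqrtRegular_of_nonpos h, sqrt_eq_zero'.mpr h, inv_zero, sub_zero]
  · have h1 : 1 ≤ x := by by_contra h1; exact hx ⟨h, not_le.mp h1⟩
    rw [invSqrtSingular, invSqrtRegular, max_eq_left h1, sqrt_div_self', one_div, sub_self]

lemma intervalIntegrable_inv_sqrt (a b : ℝ) : IntervalIntegrable (fun x => (√x)⁻¹) volume a b := by
  simpa only [rpow_neg_one_half_eq_inv_sqrt] using
    intervalIntegral.intervalIntegrable_rpow' (a := a) (b := b) (by norm_num : -1 < -(1 : ℝ) / 2)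

lemma integrable_invSqrtSingular : Integrable invSqrtSingular := by
  refine IntegrableOn.integrable_of_forall_notMem_eq_zero (s := Ioc 0 1) ?_ fun x hx =>
    invSqrtSingular_eq_zero_of_notMem fun h => hx (Ioo_subset_Ioc_self h)
  exact ((intervalIntegrable_inv_sqrt 0 1).1.sub continuous_invSqrtRegular.integrableOn_Ioc)

lemma measurable_invSqrtSingular : Measurable invSqrtSingular :=
  continuous_sqrt.measurable.inv.sub continuous_invSqrtRegular.measurable

lemma intervalIntegrable_inv_sqrt_add (u a b : ℝ) :
    IntervalIntegrable (fun t => (√(u + t))⁻¹) volume a b := by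
  simpa using (intervalIntegrable_inv_sqrt (u + a) (u + b)).comp_add_left u

lemma integral_inv_sqrt_add (u a b : ℝ) :
    ∫ t in a..b, (√(u + t))⁻¹ = 2 * (√(u + b) - √(u + a)) := by
  simp only [← rpow_neg_one_half_eq_inv_sqrt]
  rw [intervalIntegral.integral_comp_add_left (fun x => x ^ (-(1 : ℝ) / 2)) u,
    integral_rpow (Or.inl (by norm_num)), show -(1 : ℝ) / 2 + 1 = 1 / 2 by norm_num,
    ← sqrt_eq_rpow, ← sqrt_eq_rpow]
  ring

lemma integral_Ioc_mul_inv_sqrt_add (x u : ℝ) {a b : ℝ} (hab : a ≤ b) :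
    ∫ t in Ioc a b, x * (√(u + t))⁻¹ = 2 * (x * √(u + b) - x * √(u + a)) := by
  rw [← intervalIntegral.integral_of_le hab, intervalIntegral.integral_const_mul,
    integral_inv_sqrt_add]
  ring

section

variable {μ : ℝ → ℝ}

lemma integrable_mul_sqrt_add (hμc : Continuous μ)
    (hμint : IntegrableOn (fun r => μ r * (1 + √r)) (Ioi 0)) (c : ℝ) :
    Integrable (fun u => μ u * √(u + c)) := by
  have hweight : IntegrableOn (fun r => μ r * (1 + √r)) (Ioi (-c)) :=
    (by fun_prop : Continuous fun r => μ r * (1 + √r)).integrableOn_Ioi_of_integrableOn_Ioi hμint _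
  refine IntegrableOn.integrable_of_forall_notMem_eq_zero (s := Ioi (-c)) ?_ fun u hu => ?_
  · refine (hweight.norm.const_mul (1 + √|c|)).mono'
      (by fun_prop : Continuous fun u => μ u * √(u + c)).aestronglyMeasurable
      (ae_of_all _ fun u => ?_)
    rw [norm_mul, norm_of_nonneg (sqrt_nonneg _), Real.norm_eq_abs]
    calc |μ u| * √(u + c) ≤ |μ u| * ((1 + √|c|) * (1 + √u)) := by
          gcongr; exact sqrt_add_le_one_add_sqrt_abs_mul_one_add_sqrt u c
      _ = (1 + √|c|) * ‖μ u * (1 + √u)‖ := by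
          rw [norm_mul, norm_of_nonneg (by positivity : 0 ≤ 1 + √u), Real.norm_eq_abs]; ring
  · rw [sqrt_add_eq_zero_of_notMem_Ioi hu, mul_zero]

lemma integrableOn_Ioi_of_integrableOn_Ioi_mul_one_add_sqrt (hμc : Continuous μ)
    (hμint : IntegrableOn (fun r => μ r * (1 + √r)) (Ioi 0)) (a : ℝ) :
    IntegrableOn μ (Ioi a) :=
  hμc.integrableOn_Ioi_of_integrableOn_Ioi (Integrable.mono hμint hμc.aestronglyMeasurable.restrict
    (ae_of_all _ fun r => by
      rw [norm_mul, norm_of_nonneg (by positivity : 0 ≤ 1 + √r)]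
      exact le_mul_of_one_le_right (norm_nonneg _) (le_add_of_nonneg_right (sqrt_nonneg r)))) a

lemma norm_mul_invSqrtRegular_add_le {t q : ℝ} (htq : t ≤ q) (u : ℝ) :
    ‖μ u * invSqrtRegular (u + t)‖ ≤ (Ioi (-q)).indicator (fun u => ‖μ u‖) u := by
  by_cases hu : u ∈ Ioi (-q)
  · rw [indicator_of_mem hu, norm_mul]
    exact mul_le_of_le_one_right (norm_nonneg _) (norm_invSqrtRegular_le_one _)
  · rw [indicator_of_notMem hu, invSqrtRegular_of_nonpos (by rw [mem_Ioi, not_lt] at hu; linarith),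
      mul_zero, norm_zero]

lemma integrable_indicator_Ioi_norm (hμc : Continuous μ)
    (hμint : IntegrableOn (fun r => μ r * (1 + √r)) (Ioi 0)) (a : ℝ) :
    Integrable ((Ioi a).indicator (fun u => ‖μ u‖)) :=
  (integrable_indicator_iff measurableSet_Ioi).mpr
    (integrableOn_Ioi_of_integrableOn_Ioi_mul_one_add_sqrt hμc hμint a).norm

lemma integrable_mul_invSqrtRegular_add (hμc : Continuous μ)
    (hμint : IntegrableOn (fun r => μ r * (1 + √r)) (Ioi 0)) (t : ℝ) :
    Integrable (fun u => μ u * invSqrtRegular (u + t)) :=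
  (integrable_indicator_Ioi_norm hμc hμint (-t)).mono'
    (by fun_prop : Continuous fun u => μ u * invSqrtRegular (u + t)).aestronglyMeasurable
    (ae_of_all _ (norm_mul_invSqrtRegular_add_le le_rfl))

lemma continuous_integral_mul_invSqrtRegular_add (hμc : Continuous μ)
    (hμint : IntegrableOn (fun r => μ r * (1 + √r)) (Ioi 0)) :
    Continuous fun t => ∫ u, μ u * invSqrtRegular (u + t) :=
  continuous_iff_continuousAt.mpr fun b =>
    continuousAt_of_dominated
      (Eventually.of_forall fun t =>
        (by fun_prop : Continuous fun u => μ u * invSqrtRegular (u + t)).aestronglyMeasurable)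
      ((eventually_lt_nhds (lt_add_one b)).mono fun _ ht =>
        ae_of_all _ (norm_mul_invSqrtRegular_add_le ht.le))
      (integrable_indicator_Ioi_norm hμc hμint _)
      (ae_of_all _ fun u =>
        (by fun_prop : Continuous fun t => μ u * invSqrtRegular (u + t)).continuousAt)

lemma exists_norm_comp_sub_mul_invSqrtSingular_le (hμc : Continuous μ) (p q : ℝ) :
    ∃ M, ∀ t ∈ Icc p q, ∀ s, ‖μ (s - t) * invSqrtSingular s‖ ≤ M * ‖invSqrtSingular s‖ := by
  obtain ⟨M, hM⟩ := (isCompact_Icc (a := -q) (b := 1 - p)).exists_bound_of_continuousOn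
    hμc.continuousOn
  refine ⟨M, fun t ht s => ?_⟩
  by_cases hs : s ∈ Ioo 0 1
  · rw [norm_mul]
    exact mul_le_mul_of_nonneg_right
      (hM _ ⟨by linarith [hs.1, ht.2], by linarith [hs.2, ht.1]⟩) (norm_nonneg _)
  · simp [invSqrtSingular_eq_zero_of_notMem hs]

lemma aestronglyMeasurable_comp_sub_mul_invSqrtSingular (hμc : Continuous μ) (t : ℝ) :
    AEStronglyMeasurable (fun s => μ (s - t) * invSqrtSingular s) :=
  ((hμc.comp (continuous_sub_right t)).measurable.mul
    measurable_invSqrtSingular).aestronglyMeasurable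

lemma integrable_comp_sub_mul_invSqrtSingular (hμc : Continuous μ) (t : ℝ) :
    Integrable (fun s => μ (s - t) * invSqrtSingular s) := by
  obtain ⟨M, hM⟩ := exists_norm_comp_sub_mul_invSqrtSingular_le hμc t t
  exact (integrable_invSqrtSingular.norm.const_mul M).mono'
    (aestronglyMeasurable_comp_sub_mul_invSqrtSingular hμc t)
    (ae_of_all _ (hM t ⟨le_rfl, le_rfl⟩))

lemma continuous_integral_comp_sub_mul_invSqrtSingular (hμc : Continuous μ) :
    Continuous fun t => ∫ s, μ (s - t) * invSqrtSingular s :=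
  continuous_iff_continuousAt.mpr fun b => by
    obtain ⟨M, hM⟩ := exists_norm_comp_sub_mul_invSqrtSingular_le hμc (b - 1) (b + 1)
    exact continuousAt_of_dominated
      (Eventually.of_forall (aestronglyMeasurable_comp_sub_mul_invSqrtSingular hμc))
      (eventually_of_mem (Icc_mem_nhds (sub_one_lt b) (lt_add_one b)) fun t ht =>
        ae_of_all _ (hM t ht))
      (integrable_invSqrtSingular.norm.const_mul M)
      (ae_of_all _ fun s =>
        ((hμc.comp (continuous_sub_left s)).mul continuous_const).continuousAt)

lemma integral_comp_sub_mul_invSqrtSingular (t : ℝ) :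
    ∫ s, μ (s - t) * invSqrtSingular s = ∫ u, μ u * invSqrtSingular (u + t) := by
  rw [← integral_add_right_eq_self _ t]
  simp only [add_sub_cancel_right]

lemma integral_mul_inv_sqrt_add_eq (hμc : Continuous μ)
    (hμint : IntegrableOn (fun r => μ r * (1 + √r)) (Ioi 0)) (t : ℝ) :
    ∫ u, μ u * (√(u + t))⁻¹
      = (∫ u, μ u * invSqrtRegular (u + t)) + ∫ s, μ (s - t) * invSqrtSingular s := by
  have hsingular : Integrable (fun u => μ u * invSqrtSingular (u + t)) := by
    simpa using (integrable_comp_sub_mul_invSqrtSingular hμc t).comp_add_right t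
  rw [integral_comp_sub_mul_invSqrtSingular,
    ← integral_add (integrable_mul_invSqrtRegular_add hμc hμint t) hsingular]
  simp only [← mul_add, invSqrtRegular_add_invSqrtSingular]

lemma continuous_integral_mul_inv_sqrt_add (hμc : Continuous μ)
    (hμint : IntegrableOn (fun r => μ r * (1 + √r)) (Ioi 0)) :
    Continuous fun t => ∫ u, μ u * (√(u + t))⁻¹ :=
  ((continuous_integral_mul_invSqrtRegular_add hμc hμint).add
    (continuous_integral_comp_sub_mul_invSqrtSingular hμc)).congr fun t => by
      rw [Pi.add_apply, integral_mul_inv_sqrt_add_eq hμc hμint t]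

lemma integral_mul_sqrt_add_sub_integral_mul_sqrt_add (hμc : Continuous μ)
    (hμint : IntegrableOn (fun r => μ r * (1 + √r)) (Ioi 0)) {a b : ℝ} (hab : a ≤ b) :
    (∫ u, μ u * √(u + b)) - ∫ u, μ u * √(u + a)
      = (∫ t in a..b, ∫ u, μ u * (√(u + t))⁻¹) / 2 := by
  have hnorm : IntegrableOn (fun r => ‖μ r‖ * (1 + √r)) (Ioi 0) :=
    IntegrableOn.congr_fun hμint.norm (fun r _ => by
      rw [norm_mul, norm_of_nonneg (by positivity : 0 ≤ 1 + √r)]) measurableSet_Ioi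
  have hprod : Integrable (fun p : ℝ × ℝ => μ p.1 * (√(p.1 + p.2))⁻¹)
      (volume.prod (volume.restrict (Ioc a b))) := by
    refine (integrable_prod_iff ?_).mpr ⟨ae_of_all _ fun u =>
      (intervalIntegrable_inv_sqrt_add u a b).1.const_mul (μ u), ?_⟩
    · exact ((hμc.comp continuous_fst).measurable.mul
        (continuous_sqrt.comp continuous_add).measurable.inv).aestronglyMeasurable
    · simp only [norm_mul, norm_inv, norm_of_nonneg (sqrt_nonneg _),
        integral_Ioc_mul_inv_sqrt_add _ _ hab]
      exact ((integrable_mul_sqrt_add hμc.norm hnorm b).sub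
        (integrable_mul_sqrt_add hμc.norm hnorm a)).const_mul 2
  calc (∫ u, μ u * √(u + b)) - ∫ u, μ u * √(u + a)
      = ∫ u, (∫ t in Ioc a b, μ u * (√(u + t))⁻¹) / 2 := by
        rw [← integral_sub (integrable_mul_sqrt_add hμc hμint b)
          (integrable_mul_sqrt_add hμc hμint a)]
        congr 1 with u
        rw [integral_Ioc_mul_inv_sqrt_add _ _ hab]
        ring
    _ = (∫ t in a..b, ∫ u, μ u * (√(u + t))⁻¹) / 2 := by
        rw [integral_div, integral_integral_swap hprod, intervalIntegral.integral_of_le hab]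

lemma hasDerivAt_integral_mul_sqrt_add (hμc : Continuous μ)
    (hμint : IntegrableOn (fun r => μ r * (1 + √r)) (Ioi 0)) (b : ℝ) :
    HasDerivAt (fun c => ∫ u, μ u * √(u + c)) ((∫ u, μ u * (√(u + b))⁻¹) / 2) b := by
  have hφ := continuous_integral_mul_inv_sqrt_add hμc hμint
  have hFTC := ((intervalIntegral.integral_hasDerivAt_right (hφ.intervalIntegrable (b - 1) b)
    (hφ.stronglyMeasurableAtFilter _ _) hφ.continuousAt).div_const 2).const_add
    (∫ u, μ u * √(u + (b - 1)))
  refine hFTC.congr_of_eventuallyEq ?_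
  filter_upwards [eventually_gt_nhds (sub_one_lt b)] with c hc
  rw [← integral_mul_sqrt_add_sub_integral_mul_sqrt_add hμc hμint hc.le, add_sub_cancel]

end

/-- If `μ : ℝ → ℝ` is continuous, nonnegative, with `∫₀^∞ μ(r)(1 + √r) dr < ∞`, then
`G(β) = ∫_{ℝ³} μ(|v|²/2 − β) dv` is differentiable with
`G′(β) = 2√2 π ∫_{−β}^∞ μ(u)(u+β)^{−1/2} du ≥ 0`; in particular `g(β) = 1 − G(β)` has
`g′(β) ≤ 0` for all `β`. -/
theorem stmt_7 (μ : ℝ → ℝ) (hμc : Continuous μ) (hμpos : ∀ r, 0 ≤ μ r)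
    (hμint : IntegrableOn (fun r => μ r * (1 + Real.sqrt r)) (Set.Ioi (0 : ℝ))) :
    ∀ b : ℝ,
      HasDerivAt (fun c : ℝ => ∫ v : EuclideanSpace ℝ (Fin 3), μ (‖v‖ ^ 2 / 2 - c))
        (2 * Real.sqrt 2 * π * ∫ u in Set.Ioi (-b), μ u * (u + b) ^ (-(1 : ℝ) / 2)) b ∧
      0 ≤ 2 * Real.sqrt 2 * π * ∫ u in Set.Ioi (-b), μ u * (u + b) ^ (-(1 : ℝ) / 2) ∧
      deriv (fun c : ℝ => 1 - ∫ v : EuclideanSpace ℝ (Fin 3), μ (‖v‖ ^ 2 / 2 - c)) b ≤ 0 := by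
  intro b
  have hkernel : ∫ u in Ioi (-b), μ u * (u + b) ^ (-(1 : ℝ) / 2)
      = ∫ u, μ u * (√(u + b))⁻¹ := by
    simp only [rpow_neg_one_half_eq_inv_sqrt]
    refine setIntegral_eq_integral_of_forall_compl_eq_zero fun u hu => ?_
    rw [sqrt_add_eq_zero_of_notMem_Ioi hu, inv_zero, mul_zero]
  have hG : HasDerivAt (fun c : ℝ => ∫ v : EuclideanSpace ℝ (Fin 3), μ (‖v‖ ^ 2 / 2 - c))
      (2 * √2 * π * ∫ u in Ioi (-b), μ u * (u + b) ^ (-(1 : ℝ) / 2)) b := by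
    simp only [integral_comp_norm_sq_div_two_sub, hkernel]
    refine ((hasDerivAt_integral_mul_sqrt_add hμc hμint b).const_mul (4 * √2 * π)).congr_deriv ?_
    ring
  have hnonneg : 0 ≤ 2 * √2 * π * ∫ u in Ioi (-b), μ u * (u + b) ^ (-(1 : ℝ) / 2) := by
    rw [hkernel]
    exact mul_nonneg (by positivity)
      (integral_nonneg fun u => mul_nonneg (hμpos u) (inv_nonneg.mpr (sqrt_nonneg _)))
  refine ⟨hG, hnonneg, ?_⟩
  rw [(hG.const_sub 1).deriv]
  linarith
end
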